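/- Let μ ∈ ℝ, α ∈ ℝ, σ > 0, t ∈ ℝ and σ_γ > 0, and let V, W, N, N′ be independent standard normal random variables. Then the expectation over V of the expected threshold-weighted CRPS of the Gaussian distribution with random mean μ + α·V and variance σ², with Gaussian weighting measure γ₂ centered at t with scale σ_γ, satisfies E_V[ CRPS_{γ₂}(Φ_{μ+αV, σ²}) ] = P( μ − t + α·V + σ_γ·W + σ·N ≤ 0 and t − μ − α·V − σ_γ·W + σ·N′ ≤ 0 ). (This is the bivariate Gaussian CDF at (0,0) with means (μ−t, t−μ), both variances σ² + α² + σ_γ², and covariance −(α² + σ_γ²).) -/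

import Mathlib

open MeasureTheory ProbabilityTheory Set

noncomputable section

/-- The standard normal distribution `N(0,1)` on `ℝ`. -/
def stdNormal : Measure ℝ := gaussianReal 0 1

/-- The standard normal CDF `Φ`. -/
def Phi (x : ℝ) : ℝ := (stdNormal (Iic x)).toReal

/-- The standard normal PDF `φ`. -/
def stdPDF (x : ℝ) : ℝ := (Real.sqrt (2 * Real.pi))⁻¹ * Real.exp (-(x ^ 2) / 2)

/-- The CDF of the normal distribution `N(μ, σ²)`: `Φ_{μ,σ²}(u) = Φ((u - μ)/σ)`. -/
def normCDF (μ σ : ℝ) (u : ℝ) : ℝ := Phi ((u - μ) / σ)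

/-- The normal distribution `N(μ, σ²)` as a measure on `ℝ`. -/
def gaussMeasure (μ σ : ℝ) : Measure ℝ := gaussianReal μ ⟨σ ^ 2, sq_nonneg σ⟩

/-- Threshold-weighted CRPS of a predictive CDF `F` at observation `y`, with weighting
measure `γ`: `∫ (F u - 1{y ≤ u})² dγ(u)`. -/
def twCRPS (γ : Measure ℝ) (F : ℝ → ℝ) (y : ℝ) : ℝ :=
  ∫ u, (F u - (Ici y).indicator (fun _ => (1 : ℝ)) u) ^ 2 ∂γ

/-- Expected threshold-weighted CRPS of the Gaussian `N(μ, σ²)` with weighting measure `γ`: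
the expectation of `y ↦ CRPS_γ(Φ_{μ,σ²}, y)` for `y ∼ N(μ, σ²)`. -/
def etwCRPS (γ : Measure ℝ) (μ σ : ℝ) : ℝ :=
  ∫ y, twCRPS γ (normCDF μ σ) y ∂(gaussMeasure μ σ)

/-- `γ₁`: the Borel measure on `ℝ` with Lebesgue density `u ↦ 1{u ≥ t}`. -/
def gamma1 (t : ℝ) : Measure ℝ :=
  volume.withDensity ((Ici t).indicator fun _ => (1 : ENNReal))

/-- `γ₂`: the Borel measure on `ℝ` with Lebesgue density `u ↦ (1/σγ) φ((u - t)/σγ)`. -/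
def gamma2 (t σγ : ℝ) : Measure ℝ :=
  volume.withDensity fun u => ENNReal.ofReal (1 / σγ * stdPDF ((u - t) / σγ))

end

noncomputable section Aux

open Real

instance : IsProbabilityMeasure stdNormal := by
  unfold stdNormal; infer_instance

instance (m σ : ℝ) : IsProbabilityMeasure (gaussMeasure m σ) := by
  unfold gaussMeasure; exact instIsProbabilityMeasureGaussianReal _ _

lemma gaussMeasure_eq_map (m σ : ℝ) :
    gaussMeasure m σ = stdNormal.map (fun x => m + σ * x) := by
  have h1 : (fun x : ℝ => m + σ * x) = (fun x => x + m) ∘ (fun x => σ * x) := by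
    ext x; simp [add_comm]
  rw [h1, ← Measure.map_map (by fun_prop) (by fun_prop)]
  unfold stdNormal gaussMeasure
  rw [show (fun x : ℝ => σ * x) = (σ * ·) from rfl, gaussianReal_map_const_mul,
    show (fun x : ℝ => x + m) = (· + m) from rfl, gaussianReal_map_add_const]
  congr 1
  · ring
  · ext; simp; rfl

lemma gaussMeasure_Iic (m σ : ℝ) (hσ : 0 < σ) (u : ℝ) :
    gaussMeasure m σ (Iic u) = stdNormal (Iic ((u - m) / σ)) := by
  rw [gaussMeasure_eq_map, Measure.map_apply (by fun_prop) measurableSet_Iic]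
  congr 1
  ext x
  simp only [mem_preimage, mem_Iic]
  rw [le_div_iff₀ hσ]
  constructor <;> intro h <;> nlinarith

lemma normCDF_eq_toReal (m σ : ℝ) (hσ : 0 < σ) (u : ℝ) :
    normCDF m σ u = (gaussMeasure m σ (Iic u)).toReal := by
  rw [gaussMeasure_Iic m σ hσ u]; rfl

lemma monotone_Phi : Monotone Phi := by
  intro a b hab
  exact ENNReal.toReal_mono (measure_ne_top _ _) (measure_mono (Iic_subset_Iic.2 hab))

lemma measurable_Phi : Measurable Phi := monotone_Phi.measurable

lemma Phi_nonneg (x : ℝ) : 0 ≤ Phi x := ENNReal.toReal_nonneg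

lemma Phi_le_one (x : ℝ) : Phi x ≤ 1 := by
  unfold Phi
  rw [show (1 : ℝ) = (1 : ENNReal).toReal from rfl]
  exact ENNReal.toReal_mono ENNReal.one_ne_top prob_le_one

lemma stdNormal_map_neg : stdNormal.map (fun x : ℝ => -x) = stdNormal := by
  have : (fun x : ℝ => -x) = ((-1 : ℝ) * ·) := by ext x; ring
  rw [this]
  unfold stdNormal
  rw [gaussianReal_map_const_mul]
  congr 1
  · ring
  · ext; norm_num

lemma stdNormal_singleton (x : ℝ) : stdNormal {x} = 0 :=
  gaussianReal_absolutelyContinuous 0 one_ne_zero (measure_singleton x)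

lemma Phi_neg (x : ℝ) : Phi (-x) = 1 - Phi x := by
  have h1 : stdNormal (Iic (-x)) = stdNormal (Ici x) := by
    conv_lhs => rw [← stdNormal_map_neg]
    rw [Measure.map_apply measurable_neg measurableSet_Iic]
    congr 1
    ext y
    simp [neg_le]
  have h2 : stdNormal (Ici x) = stdNormal (Ioi x) := by
    rw [← Set.Ioi_insert]
    refine le_antisymm ?_ (measure_mono (subset_insert _ _))
    calc stdNormal (insert x (Ioi x)) ≤ stdNormal {x} + stdNormal (Ioi x) := by
          rw [← singleton_union]; exact measure_union_le _ _
      _ = stdNormal (Ioi x) := by rw [stdNormal_singleton, zero_add]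
  have h3 : stdNormal (Iic x) + stdNormal (Ioi x) = 1 := by
    rw [← compl_Iic]
    rw [measure_add_measure_compl measurableSet_Iic, measure_univ]
  unfold Phi
  rw [h1, h2]
  have h4 := ENNReal.toReal_add (measure_ne_top stdNormal (Iic x))
    (measure_ne_top stdNormal (Ioi x))
  rw [eq_sub_iff_add_eq, add_comm, ← h4, h3]
  rfl

end Aux


lemma measurable_normCDF (m σ : ℝ) : Measurable (normCDF m σ) := by
  unfold normCDF
  exact measurable_Phi.comp (by fun_prop)

lemma normCDF_nonneg (m σ u : ℝ) : 0 ≤ normCDF m σ u := Phi_nonneg _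

lemma normCDF_le_one (m σ u : ℝ) : normCDF m σ u ≤ 1 := Phi_le_one _

lemma inner_integral (m σ : ℝ) (hσ : 0 < σ) (u : ℝ) :
    ∫ y, (normCDF m σ u - (Ici y).indicator (fun _ => (1 : ℝ)) u) ^ 2 ∂(gaussMeasure m σ)
      = normCDF m σ u * (1 - normCDF m σ u) := by
  set F := normCDF m σ u with hF
  have hind : ∀ y : ℝ, (Ici y).indicator (fun _ => (1 : ℝ)) u
      = (Iic u).indicator (fun _ => (1 : ℝ)) y := by
    intro y
    by_cases h : y ≤ u
    · rw [indicator_of_mem (mem_Ici.2 h), indicator_of_mem (mem_Iic.2 h)]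
    · rw [indicator_of_notMem (by simpa using h), indicator_of_notMem (by simpa using h)]
  have hexp : ∀ y : ℝ, (F - (Iic u).indicator (fun _ => (1 : ℝ)) y) ^ 2
      = F ^ 2 - (2 * F - 1) * (Iic u).indicator (fun _ => (1 : ℝ)) y := by
    intro y
    by_cases h : y ∈ Iic u
    · rw [indicator_of_mem h]; ring
    · rw [indicator_of_notMem h]; ring
  simp_rw [hind, hexp]
  have hint : Integrable ((Iic u).indicator (fun _ => (1 : ℝ))) (gaussMeasure m σ) :=
    (integrable_const (1 : ℝ)).indicator measurableSet_Iic
  rw [integral_sub (integrable_const _) (hint.const_mul _), integral_const,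
    integral_const_mul, integral_indicator_const _ measurableSet_Iic]
  rw [show (gaussMeasure m σ).real (Iic u) = F from (normCDF_eq_toReal m σ hσ u).symm]
  simp only [probReal_univ, measure_univ, ENNReal.toReal_one, smul_eq_mul, one_mul, mul_one]
  ring

lemma etwCRPS_eq (γ : Measure ℝ) [IsProbabilityMeasure γ] (m σ : ℝ) (hσ : 0 < σ) :
    etwCRPS γ m σ = ∫ u, normCDF m σ u * (1 - normCDF m σ u) ∂γ := by
  unfold etwCRPS twCRPS
  have hmeas : AEStronglyMeasurable
      (Function.uncurry fun (y u : ℝ) =>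
        (normCDF m σ u - (Ici y).indicator (fun _ => (1 : ℝ)) u) ^ 2)
      ((gaussMeasure m σ).prod γ) := by
    apply Measurable.aestronglyMeasurable
    have h1 : Measurable fun p : ℝ × ℝ => (Ici p.1).indicator (fun _ => (1 : ℝ)) p.2 := by
      have : (fun p : ℝ × ℝ => (Ici p.1).indicator (fun _ => (1 : ℝ)) p.2)
          = ({p : ℝ × ℝ | p.1 ≤ p.2}).indicator (fun _ => (1 : ℝ)) := by
        ext p
        by_cases h : p.1 ≤ p.2
        · rw [indicator_of_mem (mem_Ici.2 h)]
          exact (indicator_of_mem (show p ∈ {p : ℝ × ℝ | p.1 ≤ p.2} from h)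
            (fun _ => (1 : ℝ))).symm
        · rw [indicator_of_notMem (show p.2 ∉ Ici p.1 by simpa using h)]
          exact (indicator_of_notMem (show p ∉ {p : ℝ × ℝ | p.1 ≤ p.2} from h)
            (fun _ => (1 : ℝ))).symm
      rw [this]
      exact (measurable_const.indicator (measurableSet_le measurable_fst measurable_snd))
    exact (((measurable_normCDF m σ).comp measurable_snd).sub h1).pow_const 2
  have hbound : Integrable
      (Function.uncurry fun (y u : ℝ) =>
        (normCDF m σ u - (Ici y).indicator (fun _ => (1 : ℝ)) u) ^ 2)
      ((gaussMeasure m σ).prod γ) := by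
    refine Integrable.mono' (integrable_const (1 : ℝ)) hmeas ?_
    filter_upwards with p
    rw [Function.uncurry_apply_pair, Real.norm_eq_abs, abs_pow]
    calc |normCDF m σ p.2 - (Ici p.1).indicator (fun _ => (1 : ℝ)) p.2| ^ 2
        ≤ 1 ^ 2 := by
          apply pow_le_pow_left₀ (abs_nonneg _)
          rw [abs_le]
          have h1 := normCDF_nonneg m σ p.2
          have h2 := normCDF_le_one m σ p.2
          have h3 : (0:ℝ) ≤ (Ici p.1).indicator (fun _ => (1 : ℝ)) p.2 :=
            indicator_nonneg (fun _ _ => zero_le_one) _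
          have h4 : (Ici p.1).indicator (fun _ => (1 : ℝ)) p.2 ≤ 1 := by
            by_cases h : p.2 ∈ Ici p.1
            · rw [indicator_of_mem h]
            · rw [indicator_of_notMem h]; exact zero_le_one
          constructor <;> linarith
      _ = 1 := one_pow 2
  rw [integral_integral_swap hbound]
  exact integral_congr_ae (Filter.Eventually.of_forall fun u => inner_integral m σ hσ u)

lemma gamma2_eq (t σγ : ℝ) (hσγ : 0 < σγ) : gamma2 t σγ = gaussMeasure t σγ := by
  have hv : (⟨σγ ^ 2, sq_nonneg σγ⟩ : NNReal) ≠ 0 :=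
    fun h => pow_ne_zero 2 hσγ.ne' (congrArg NNReal.toReal h)
  unfold gamma2 gaussMeasure
  rw [gaussianReal_of_var_ne_zero t hv]
  congr 1
  ext u
  unfold gaussianPDF gaussianPDFReal stdPDF
  congr 1
  change 1 / σγ * _ = (Real.sqrt (2 * Real.pi * σγ ^ 2))⁻¹ * Real.exp (-(u - t) ^ 2 / (2 * σγ ^ 2))
  have hsqrt : Real.sqrt (2 * Real.pi * σγ ^ 2) = Real.sqrt (2 * Real.pi) * σγ := by
    rw [Real.sqrt_mul (by positivity), Real.sqrt_sq hσγ.le]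
  have hexp : -(((u - t) / σγ) ^ 2) / 2 = -(u - t) ^ 2 / (2 * σγ ^ 2) := by
    rw [div_pow, neg_div, div_div, neg_div, mul_comm (σγ ^ 2) 2]
  rw [hsqrt, hexp, mul_inv]
  ring

lemma measurable_stdNormal_Iic : Measurable fun x : ℝ => stdNormal (Iic x) := by
  apply Monotone.measurable
  intro a b hab
  exact measure_mono (Iic_subset_Iic.2 hab)

lemma integral_comp_neg_stdNormal (h : ℝ → ℝ) (hh : AEStronglyMeasurable h stdNormal) :
    ∫ w, h (-w) ∂stdNormal = ∫ w, h w ∂stdNormal := by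
  conv_rhs => rw [← stdNormal_map_neg]
  rw [integral_map measurable_neg.aemeasurable (by rwa [stdNormal_map_neg])]

lemma cond_iff {σ : ℝ} (hσ : 0 < σ) (X y : ℝ) : X + σ * y ≤ 0 ↔ y ≤ -(X / σ) := by
  rw [← neg_div, le_div_iff₀ hσ]
  constructor <;> intro h <;> nlinarith

set_option maxHeartbeats 1000000 in
theorem stmt_7 (μ α σ t σγ : ℝ) (hσ : 0 < σ) (hσγ : 0 < σγ) :
    ∫ v, etwCRPS (gamma2 t σγ) (μ + α * v) σ ∂stdNormal =
      ((stdNormal.prod (stdNormal.prod (stdNormal.prod stdNormal)))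
        {q : ℝ × ℝ × ℝ × ℝ |
          μ - t + α * q.1 + σγ * q.2.1 + σ * q.2.2.1 ≤ 0 ∧
          t - μ - α * q.1 - σγ * q.2.1 + σ * q.2.2.2 ≤ 0}).toReal := by
  classical
  obtain ⟨S, hSdef⟩ : ∃ S : Set (ℝ × ℝ × ℝ × ℝ), S = {q : ℝ × ℝ × ℝ × ℝ |
      μ - t + α * q.1 + σγ * q.2.1 + σ * q.2.2.1 ≤ 0 ∧
      t - μ - α * q.1 - σγ * q.2.1 + σ * q.2.2.2 ≤ 0} := ⟨_, rfl⟩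
  rw [show {q : ℝ × ℝ × ℝ × ℝ |
      μ - t + α * q.1 + σγ * q.2.1 + σ * q.2.2.1 ≤ 0 ∧
      t - μ - α * q.1 - σγ * q.2.1 + σ * q.2.2.2 ≤ 0} = S from hSdef.symm]
  have hA : MeasurableSet {q : ℝ × ℝ × ℝ × ℝ | μ - t + α * q.1 + σγ * q.2.1 + σ * q.2.2.1 ≤ 0} :=
    measurableSet_le (by fun_prop) measurable_const
  have hB : MeasurableSet {q : ℝ × ℝ × ℝ × ℝ | t - μ - α * q.1 - σγ * q.2.1 + σ * q.2.2.2 ≤ 0} :=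
    measurableSet_le (by fun_prop) measurable_const
  have hS : MeasurableSet S := hSdef ▸ hA.inter hB
  -- the ENNReal-valued integrand
  obtain ⟨f, hfdef⟩ : ∃ f : ℝ → ℝ → ENNReal, f = fun v w =>
    stdNormal (Iic (-((μ - t + α * v + σγ * w) / σ))) *
      stdNormal (Iic (-((t - μ - α * v - σγ * w) / σ))) := ⟨_, rfl⟩
  have hg1 : Measurable fun p : ℝ × ℝ => -((μ - t + α * p.1 + σγ * p.2) / σ) := by fun_prop
  have hg2 : Measurable fun p : ℝ × ℝ => -((t - μ - α * p.1 - σγ * p.2) / σ) := by fun_prop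
  have hf : Measurable (Function.uncurry f) := by
    rw [hfdef]
    exact (measurable_stdNormal_Iic.comp hg1).mul (measurable_stdNormal_Iic.comp hg2)
  have hfle : ∀ v w, f v w ≤ 1 := by
    rw [hfdef]
    exact fun v w => mul_le_one' prob_le_one prob_le_one
  have hinner_le : ∀ v, ∫⁻ w, f v w ∂stdNormal ≤ 1 := by
    intro v
    calc ∫⁻ w, f v w ∂stdNormal ≤ ∫⁻ _, 1 ∂stdNormal := lintegral_mono fun w => hfle v w
      _ = 1 := by simp
  have hneg : ∀ v w : ℝ, -((t - μ - α * v - σγ * w) / σ) = (μ - t + α * v + σγ * w) / σ := by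
    intro v w
    rw [← neg_div]
    congr 1
    ring
  -- LHS rewriting
  have lhs_eq : ∀ v : ℝ, etwCRPS (gamma2 t σγ) (μ + α * v) σ
      = ∫ w, Phi (-((μ - t + α * v + σγ * w) / σ)) *
          Phi ((μ - t + α * v + σγ * w) / σ) ∂stdNormal := by
    intro v
    have hmeas : AEStronglyMeasurable
        (fun u => normCDF (μ + α * v) σ u * (1 - normCDF (μ + α * v) σ u))
        (stdNormal.map fun x => t + σγ * x) :=
      ((measurable_normCDF _ _).mul
        (measurable_const.sub (measurable_normCDF _ _))).aestronglyMeasurable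
    have hmeas2 : AEStronglyMeasurable
        (fun w => normCDF (μ + α * v) σ (t + σγ * w) *
          (1 - normCDF (μ + α * v) σ (t + σγ * w))) stdNormal := by
      apply Measurable.aestronglyMeasurable
      have h0 : Measurable fun w : ℝ => normCDF (μ + α * v) σ (t + σγ * w) :=
        (measurable_normCDF _ _).comp (by fun_prop)
      exact h0.mul (measurable_const.sub h0)
    rw [gamma2_eq t σγ hσγ, etwCRPS_eq _ _ _ hσ, gaussMeasure_eq_map t σγ,
      integral_map (by fun_prop) hmeas,
      ← integral_comp_neg_stdNormal
        (fun w => normCDF (μ + α * v) σ (t + σγ * w) *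
          (1 - normCDF (μ + α * v) σ (t + σγ * w))) hmeas2]
    apply integral_congr_ae
    filter_upwards with w
    have h1 : normCDF (μ + α * v) σ (t + σγ * -w)
        = Phi (-((μ - t + α * v + σγ * w) / σ)) := by
      unfold normCDF
      congr 1
      rw [← neg_div]
      congr 1
      ring
    rw [h1, Phi_neg]
    ring
  -- RHS rewriting
  have hpre : ∀ v w : ℝ, (Prod.mk w ⁻¹' (Prod.mk v ⁻¹' S))
      = Iic (-((μ - t + α * v + σγ * w) / σ)) ×ˢ Iic (-((t - μ - α * v - σγ * w) / σ)) := by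
    intro v w
    rw [hSdef]
    ext p
    simp only [mem_preimage, mem_setOf_eq, mem_prod, mem_Iic]
    rw [← cond_iff hσ, ← cond_iff hσ]
  have h3 : ∀ v, (stdNormal.prod (stdNormal.prod stdNormal)) (Prod.mk v ⁻¹' S)
      = ∫⁻ w, f v w ∂stdNormal := by
    intro v
    rw [Measure.prod_apply (measurable_prodMk_left hS)]
    apply lintegral_congr
    intro w
    rw [hpre v w, Measure.prod_prod, hfdef]
  have conv2 : ∀ v, (∫⁻ w, f v w ∂stdNormal).toReal
      = ∫ w, Phi (-((μ - t + α * v + σγ * w) / σ)) *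
          Phi (-((t - μ - α * v - σγ * w) / σ)) ∂stdNormal := by
    intro v
    have h4 : Measurable fun w : ℝ => f v w := hf.comp measurable_prodMk_left
    rw [← integral_toReal h4.aemeasurable
      (Filter.Eventually.of_forall fun w => lt_of_le_of_lt (hfle v w) ENNReal.one_lt_top)]
    apply integral_congr_ae
    filter_upwards with w
    rw [hfdef]
    rw [ENNReal.toReal_mul]
    rfl
  calc ∫ v, etwCRPS (gamma2 t σγ) (μ + α * v) σ ∂stdNormal
      = ∫ v, ∫ w, Phi (-((μ - t + α * v + σγ * w) / σ)) *
          Phi ((μ - t + α * v + σγ * w) / σ) ∂stdNormal ∂stdNormal :=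
        integral_congr_ae (Filter.Eventually.of_forall lhs_eq)
    _ = ∫ v, (∫⁻ w, f v w ∂stdNormal).toReal ∂stdNormal := by
        apply integral_congr_ae
        filter_upwards with v
        rw [conv2 v]
        apply integral_congr_ae
        filter_upwards with w
        congr 1
        rw [hneg v w]
    _ = (∫⁻ v, ∫⁻ w, f v w ∂stdNormal ∂stdNormal).toReal := by
        rw [integral_toReal (hf.lintegral_prod_right).aemeasurable
          (Filter.Eventually.of_forall fun v =>
            lt_of_le_of_lt (hinner_le v) ENNReal.one_lt_top)]
    _ = ((stdNormal.prod (stdNormal.prod (stdNormal.prod stdNormal))) S).toReal := by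
        rw [Measure.prod_apply hS]
        congr 1
        exact lintegral_congr fun v => (h3 v).symm
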